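/- arXiv:1609.06736 — 5 statements merged into one kernel-verified Lean document; each statement's English description precedes it below -/
import Mathlib

section
/- Let μ be a probability distribution on [n] that is (γ,L)-decomposable, i.e., there is a partition of [n] into at most L intervals such that each interval I in the partition satisfies μ(I) ≤ γ/L or max_{i∈I} μ(i) ≤ (1+γ) min_{i∈I} μ(i). Then for every interval partition 𝓘' = (I'_1,…,I'_r) of [n] in which every non-singleton interval has μ-weight at most γ/L, the total μ-weight of intervals I'_j with bias(μ|I'_j) > γ is at most 2γ. -/
/-- A set of indices in `Fin n` is an interval if it is of the form `Finset.Icc a b`. -/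
def IsInterval {n : ℕ} (S : Finset (Fin n)) : Prop := ∃ a b : Fin n, S = Finset.Icc a b

/-- If `μ` is `(γ,L)`-decomposable, then in any `γ/L`-fine interval partition
(every non-singleton interval has weight at most `γ/L`), the total weight of intervals
whose conditional bias exceeds `γ` is at most `2γ`. -/
theorem stmt3 {n L ℓ r : ℕ} (μ : Fin n → ℝ) (hμ0 : ∀ i, 0 ≤ μ i) (hμ1 : ∑ i, μ i = 1)
    (γ : ℝ) (hγ : 0 < γ) (hL : 0 < L)
    -- the (γ, L)-decomposition of μ
    (J : Fin ℓ → Finset (Fin n)) (hℓ : ℓ ≤ L)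
    (hJint : ∀ k, IsInterval (J k)) (hJne : ∀ k, (J k).Nonempty)
    (hJdisj : ∀ k k', k ≠ k' → Disjoint (J k) (J k'))
    (hJcover : ∀ i, ∃ k, i ∈ J k)
    (hJdecomp : ∀ k, (∑ i ∈ J k, μ i ≤ γ / L) ∨
        (J k).sup' (hJne k) μ ≤ (1 + γ) * (J k).inf' (hJne k) μ)
    -- a γ/L-fine interval partition
    (𝓘 : Fin r → Finset (Fin n)) (hint : ∀ j, IsInterval (𝓘 j)) (hne : ∀ j, (𝓘 j).Nonempty)
    (hdisj : ∀ j j', j ≠ j' → Disjoint (𝓘 j) (𝓘 j'))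
    (hcover : ∀ i, ∃ j, i ∈ 𝓘 j)
    (hfine : ∀ j, 1 < (𝓘 j).card → ∑ i ∈ 𝓘 j, μ i ≤ γ / L) :
    ∑ j ∈ Finset.univ.filter (fun j =>
        (1 + γ) * (𝓘 j).inf' (hne j) μ < (𝓘 j).sup' (hne j) μ),
      ∑ i ∈ 𝓘 j, μ i ≤ 2 * γ := by
  classical
  set B := Finset.univ.filter (fun j =>
      (1 + γ) * (𝓘 j).inf' (hne j) μ < (𝓘 j).sup' (hne j) μ) with hBdef
  have hγL : 0 ≤ γ / L := div_nonneg hγ.le (Nat.cast_nonneg L)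
  have hLne : (L : ℝ) ≠ 0 := Nat.cast_ne_zero.mpr hL.ne'
  have hℓγ : (ℓ : ℝ) * (γ / L) ≤ γ := by
    have h1 : (ℓ : ℝ) ≤ L := Nat.cast_le.mpr hℓ
    calc (ℓ : ℝ) * (γ / L) ≤ (L : ℝ) * (γ / L) := mul_le_mul_of_nonneg_right h1 hγL
      _ = γ := by field_simp
  -- biased intervals are non-singleton
  have hbig : ∀ j ∈ B, 1 < (𝓘 j).card := by
    intro j hj
    rw [hBdef, Finset.mem_filter] at hj
    by_contra hcard
    push_neg at hcard
    have hc1 : (𝓘 j).card = 1 := le_antisymm hcard (Finset.one_le_card.mpr (hne j))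
    obtain ⟨a, ha⟩ := Finset.card_eq_one.mp hc1
    have hsup : (𝓘 j).sup' (hne j) μ = μ a :=
      le_antisymm (Finset.sup'_le _ _ fun i hi => by
        rw [ha, Finset.mem_singleton] at hi; rw [hi])
        (Finset.le_sup' _ (by rw [ha]; exact Finset.mem_singleton_self a))
    have hinf : (𝓘 j).inf' (hne j) μ = μ a :=
      le_antisymm (Finset.inf'_le _ (by rw [ha]; exact Finset.mem_singleton_self a))
        (Finset.le_inf' _ _ fun i hi => by
          rw [ha, Finset.mem_singleton] at hi; rw [hi])
    rw [hsup, hinf] at hj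
    nlinarith [hμ0 a, hj.2]
  have hwle : ∀ j ∈ B, ∑ i ∈ 𝓘 j, μ i ≤ γ / L := fun j hj => hfine j (hbig j hj)
  -- split B according to whether 𝓘 j is contained in some J k
  set B1 := B.filter (fun j => ∃ k, 𝓘 j ⊆ J k) with hB1def
  set B2 := B.filter (fun j => ¬ ∃ k, 𝓘 j ⊆ J k) with hB2def
  have hsplit : ∑ j ∈ B, ∑ i ∈ 𝓘 j, μ i
      = ∑ j ∈ B1, ∑ i ∈ 𝓘 j, μ i + ∑ j ∈ B2, ∑ i ∈ 𝓘 j, μ i :=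
    (Finset.sum_filter_add_sum_filter_not B _ _).symm
  -- a total "choice" function selecting a containing block when one exists
  let kj : Fin r → Fin ℓ := fun j =>
    if h : ∃ k, 𝓘 j ⊆ J k then h.choose else (hJcover (hne j).choose).choose
  have hkj : ∀ j ∈ B1, 𝓘 j ⊆ J (kj j) := by
    intro j hj
    rw [hB1def, Finset.mem_filter] at hj
    have h := hj.2
    simp only [kj, dif_pos h]
    exact h.choose_spec
  -- Bound the B1 part
  have hB1bound : ∑ j ∈ B1, ∑ i ∈ 𝓘 j, μ i ≤ γ := by
    have hfib := Finset.sum_fiberwise_of_maps_to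
      (g := kj) (t := (Finset.univ : Finset (Fin ℓ)))
      (fun j _ => Finset.mem_univ _) (fun j => ∑ i ∈ 𝓘 j, μ i) (s := B1)
    rw [← hfib]
    have heach : ∀ k : Fin ℓ,
        ∑ j ∈ B1.filter (fun j => kj j = k), ∑ i ∈ 𝓘 j, μ i ≤ γ / L := by
      intro k
      set F := B1.filter (fun j => kj j = k) with hFdef
      rcases F.eq_empty_or_nonempty with hF | ⟨j0, hj0⟩
      · rw [hF, Finset.sum_empty]; exact hγL
      have hsubF : ∀ j ∈ F, 𝓘 j ⊆ J k := by
        intro j hj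
        rw [hFdef, Finset.mem_filter] at hj
        rw [← hj.2]
        exact hkj j hj.1
      have hstep : ∑ j ∈ F, ∑ i ∈ 𝓘 j, μ i ≤ ∑ i ∈ J k, μ i := by
        rw [← Finset.sum_biUnion (by
          intro x hx y hy hxy
          exact hdisj x y hxy)]
        exact Finset.sum_le_sum_of_subset_of_nonneg
          (Finset.biUnion_subset.mpr hsubF) (fun i _ _ => hμ0 i)
      refine hstep.trans ?_
      -- J k must be light, since it contains a biased interval
      rcases hJdecomp k with h | h
      · exact h
      · exfalso
        have hj0F := hj0
        rw [hFdef, Finset.mem_filter] at hj0F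
        have hj0B1 := hj0F.1
        rw [hB1def, Finset.mem_filter] at hj0B1
        have hj0B := hj0B1.1
        rw [hBdef, Finset.mem_filter] at hj0B
        have hsub : 𝓘 j0 ⊆ J k := hsubF j0 hj0
        obtain ⟨a, ha⟩ := hne j0
        have hsup : (𝓘 j0).sup' (hne j0) μ ≤ (J k).sup' (hJne k) μ :=
          Finset.sup'_le _ _ fun i hi => Finset.le_sup' _ (hsub hi)
        have hinf : (J k).inf' (hJne k) μ ≤ (𝓘 j0).inf' (hne j0) μ :=
          Finset.le_inf' _ _ fun i hi => Finset.inf'_le _ (hsub hi)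
        have := hj0B.2
        nlinarith [this, hsup, hinf, h]
    calc ∑ k : Fin ℓ, ∑ j ∈ B1.filter (fun j => kj j = k), ∑ i ∈ 𝓘 j, μ i
        ≤ ∑ _k : Fin ℓ, γ / L := Finset.sum_le_sum fun k _ => heach k
      _ = (ℓ : ℝ) * (γ / L) := by
          rw [Finset.sum_const, Finset.card_univ, Fintype.card_fin, nsmul_eq_mul]
      _ ≤ γ := hℓγ
  -- Bound the B2 part: each crossing interval contains the max of some block
  have hexist : ∀ j ∈ B2, ∃ k : Fin ℓ, (J k).max' (hJne k) ∈ 𝓘 j := by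
    intro j hj
    rw [hB2def, Finset.mem_filter] at hj
    have hj2 := hj.2
    obtain ⟨a, ha⟩ := hne j
    obtain ⟨k0, hk0⟩ := hJcover a
    have hnsub : ¬ 𝓘 j ⊆ J k0 := fun h => hj2 ⟨k0, h⟩
    obtain ⟨b, hb, hbk0⟩ := Finset.not_subset.mp hnsub
    obtain ⟨p, q, hpq⟩ := hint j
    obtain ⟨c, d, hcd⟩ := hJint k0
    have hamem := ha; rw [hpq, Finset.mem_Icc] at hamem
    have hbmem := hb; rw [hpq, Finset.mem_Icc] at hbmem
    have hak0 := hk0; rw [hcd, Finset.mem_Icc] at hak0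
    have hbI : ¬ (c ≤ b ∧ b ≤ d) := by rw [hcd, Finset.mem_Icc] at hbk0; exact hbk0
    rcases le_or_gt c b with hcb | hbc
    · -- d < b : max of J k0 lies in 𝓘 j
      have hdb : d < b := by
        by_contra h; push_neg at h; exact hbI ⟨hcb, h⟩
      refine ⟨k0, ?_⟩
      have hd : (J k0).max' (hJne k0) = d := by
        apply le_antisymm
        · apply Finset.max'_le
          intro y hy
          rw [hcd, Finset.mem_Icc] at hy
          exact hy.2
        · exact Finset.le_max' _ d (by
            rw [hcd, Finset.mem_Icc]; exact ⟨hak0.1.trans hak0.2, le_refl d⟩)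
      rw [hd, hpq, Finset.mem_Icc]
      exact ⟨hamem.1.trans hak0.2, hdb.le.trans hbmem.2⟩
    · -- b < c : the block containing b lies fully left of J k0
      obtain ⟨k1, hk1⟩ := hJcover b
      obtain ⟨c', d', hcd'⟩ := hJint k1
      have hbk1 := hk1; rw [hcd', Finset.mem_Icc] at hbk1
      have hne01 : k1 ≠ k0 := by
        intro h; rw [h] at hk1; exact hbk0 hk1
      have hd'c : d' < c := by
        by_contra h; push_neg at h
        have hcJ1 : c ∈ J k1 := by
          rw [hcd', Finset.mem_Icc]; exact ⟨hbk1.1.trans hbc.le, h⟩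
        have hcJ0 : c ∈ J k0 := by
          rw [hcd, Finset.mem_Icc]; exact ⟨le_refl c, hak0.1.trans hak0.2⟩
        exact Finset.disjoint_left.mp (hJdisj k1 k0 hne01) hcJ1 hcJ0
      refine ⟨k1, ?_⟩
      have hd : (J k1).max' (hJne k1) = d' := by
        apply le_antisymm
        · apply Finset.max'_le
          intro y hy
          rw [hcd', Finset.mem_Icc] at hy
          exact hy.2
        · exact Finset.le_max' _ d' (by
            rw [hcd', Finset.mem_Icc]; exact ⟨hbk1.1.trans hbk1.2, le_refl d'⟩)
      rw [hd, hpq, Finset.mem_Icc]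
      exact ⟨hbmem.1.trans hbk1.2, ((hd'c.trans_le hak0.1).le).trans hamem.2⟩
  -- the map j ↦ block whose max lies in 𝓘 j, injective on B2
  let m : Fin r → Fin ℓ := fun j =>
    if h : ∃ k : Fin ℓ, (J k).max' (hJne k) ∈ 𝓘 j then h.choose
    else (hJcover (hne j).choose).choose
  have hm : ∀ j ∈ B2, (J (m j)).max' (hJne (m j)) ∈ 𝓘 j := by
    intro j hj
    have h := hexist j hj
    simp only [m, dif_pos h]
    exact h.choose_spec
  have hminj : Set.InjOn m B2 := by
    intro j hj j' hj' hmm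
    by_contra hne'
    have h1 := hm j hj
    have h2 := hm j' hj'
    rw [hmm] at h1
    exact Finset.disjoint_left.mp (hdisj j j' hne') h1 h2
  have hcard2 : B2.card ≤ ℓ := by
    have := Finset.card_le_card_of_injOn m (fun j _ => Finset.mem_univ (m j)) hminj
    simpa using this
  have hB2bound : ∑ j ∈ B2, ∑ i ∈ 𝓘 j, μ i ≤ γ := by
    have h1 : ∑ j ∈ B2, ∑ i ∈ 𝓘 j, μ i ≤ B2.card • (γ / L) :=
      Finset.sum_le_card_nsmul _ _ _ fun j hj =>
        hwle j (Finset.mem_filter.mp (hB2def ▸ hj)).1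
    refine h1.trans ?_
    rw [nsmul_eq_mul]
    calc (B2.card : ℝ) * (γ / L) ≤ (ℓ : ℝ) * (γ / L) :=
          mul_le_mul_of_nonneg_right (Nat.cast_le.mpr hcard2) hγL
      _ ≤ γ := hℓγ
  calc ∑ j ∈ B, ∑ i ∈ 𝓘 j, μ i
      = ∑ j ∈ B1, ∑ i ∈ 𝓘 j, μ i + ∑ j ∈ B2, ∑ i ∈ 𝓘 j, μ i := hsplit
    _ ≤ γ + γ := add_le_add hB1bound hB2bound
    _ = 2 * γ := by ring
end

section
/- Let μ be a (γ,L)-decomposable distribution on [n], and let 𝓘' = (I'_1,…,I'_r) be a (γ/L, γ)-fine interval partition of μ, meaning the total μ-weight of the 'violating' intervals (those of size > 1 and μ-weight > γ/L) is at most γ. Then the total μ-weight of intervals I'_j with bias(μ|I'_j) > γ is at most 3γ. -/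
/-- If `μ` is `(γ,L)`-decomposable, then in any `(γ/L, γ)`-fine interval partition
(the violating intervals, of size > 1 and weight > γ/L, have total weight at most γ),
the total weight of intervals whose conditional bias exceeds `γ` is at most `3γ`. -/
theorem stmt4 {n L ℓ r : ℕ} (μ : Fin n → ℝ) (hμ0 : ∀ i, 0 ≤ μ i) (hμ1 : ∑ i, μ i = 1)
    (γ : ℝ) (hγ : 0 < γ) (hL : 0 < L)
    -- the (γ, L)-decomposition of μ
    (J : Fin ℓ → Finset (Fin n)) (hℓ : ℓ ≤ L)
    (hJint : ∀ k, IsInterval (J k)) (hJne : ∀ k, (J k).Nonempty)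
    (hJdisj : ∀ k k', k ≠ k' → Disjoint (J k) (J k'))
    (hJcover : ∀ i, ∃ k, i ∈ J k)
    (hJdecomp : ∀ k, (∑ i ∈ J k, μ i ≤ γ / L) ∨
        (J k).sup' (hJne k) μ ≤ (1 + γ) * (J k).inf' (hJne k) μ)
    -- a (γ/L, γ)-fine interval partition
    (𝓘 : Fin r → Finset (Fin n)) (hint : ∀ j, IsInterval (𝓘 j)) (hne : ∀ j, (𝓘 j).Nonempty)
    (hdisj : ∀ j j', j ≠ j' → Disjoint (𝓘 j) (𝓘 j'))
    (hcover : ∀ i, ∃ j, i ∈ 𝓘 j)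
    (hfine : ∑ j ∈ Finset.univ.filter (fun j =>
        γ / L < ∑ i ∈ 𝓘 j, μ i ∧ 1 < (𝓘 j).card), ∑ i ∈ 𝓘 j, μ i ≤ γ) :
    ∑ j ∈ Finset.univ.filter (fun j =>
        (1 + γ) * (𝓘 j).inf' (hne j) μ < (𝓘 j).sup' (hne j) μ),
      ∑ i ∈ 𝓘 j, μ i ≤ 3 * γ := by
  classical
  have hL0 : (0:ℝ) < L := by exact_mod_cast hL
  have hγL : (0:ℝ) ≤ γ / L := le_of_lt (div_pos hγ hL0)
  set Bad : Finset (Fin r) := Finset.univ.filter (fun j =>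
      (1 + γ) * (𝓘 j).inf' (hne j) μ < (𝓘 j).sup' (hne j) μ) with hBad
  -- every bad interval has more than one element
  have hcard1 : ∀ j ∈ Bad, 1 < (𝓘 j).card := by
    intro j hj
    rw [hBad, Finset.mem_filter] at hj
    rcases Nat.lt_or_ge 1 (𝓘 j).card with h | h
    · exact h
    · exfalso
      have hc : (𝓘 j).card = 1 := le_antisymm h (hne j).card_pos
      obtain ⟨i, hi⟩ := Finset.card_eq_one.mp hc
      have hj2 := hj.2
      simp only [hi] at hj2
      rw [Finset.sup'_singleton, Finset.inf'_singleton] at hj2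
      nlinarith [hμ0 i]
  set A : Finset (Fin r) := Bad.filter (fun j => γ / L < ∑ i ∈ 𝓘 j, μ i) with hA
  set rest : Finset (Fin r) := Bad.filter (fun j => ¬ γ / L < ∑ i ∈ 𝓘 j, μ i) with hrest
  set B : Finset (Fin r) := rest.filter (fun j => ∃ k, 𝓘 j ⊆ J k) with hB
  set C : Finset (Fin r) := rest.filter (fun j => ¬ ∃ k, 𝓘 j ⊆ J k) with hC
  have hsplit : ∑ j ∈ Bad, ∑ i ∈ 𝓘 j, μ i
      = (∑ j ∈ A, ∑ i ∈ 𝓘 j, μ i) + ((∑ j ∈ B, ∑ i ∈ 𝓘 j, μ i) + (∑ j ∈ C, ∑ i ∈ 𝓘 j, μ i)) := by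
    have e2 : (∑ j ∈ B, ∑ i ∈ 𝓘 j, μ i) + (∑ j ∈ C, ∑ i ∈ 𝓘 j, μ i)
        = ∑ j ∈ rest, ∑ i ∈ 𝓘 j, μ i :=
      Finset.sum_filter_add_sum_filter_not rest (fun j => ∃ k, 𝓘 j ⊆ J k) _
    have e1 : (∑ j ∈ A, ∑ i ∈ 𝓘 j, μ i) + (∑ j ∈ rest, ∑ i ∈ 𝓘 j, μ i)
        = ∑ j ∈ Bad, ∑ i ∈ 𝓘 j, μ i :=
      Finset.sum_filter_add_sum_filter_not Bad (fun j => γ / L < ∑ i ∈ 𝓘 j, μ i) _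
    linarith
  -- Bound for A
  have hAbound : ∑ j ∈ A, ∑ i ∈ 𝓘 j, μ i ≤ γ := by
    refine le_trans (Finset.sum_le_sum_of_subset_of_nonneg ?_ ?_) hfine
    · intro j hj
      rw [hA, Finset.mem_filter] at hj
      rw [Finset.mem_filter]
      exact ⟨Finset.mem_univ j, hj.2, hcard1 j hj.1⟩
    · intro j _ _
      exact Finset.sum_nonneg fun i _ => hμ0 i
  -- Bound for B
  have hBbound : ∑ j ∈ B, ∑ i ∈ 𝓘 j, μ i ≤ γ := by
    -- each j in B is contained in a light J k
    have hkey : ∀ j ∈ B, ∃ k, 𝓘 j ⊆ J k ∧ ∑ i ∈ J k, μ i ≤ γ / L := by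
      intro j hj
      rw [hB, Finset.mem_filter] at hj
      obtain ⟨k, hk⟩ := hj.2
      refine ⟨k, hk, ?_⟩
      rcases hJdecomp k with h | h
      · exact h
      · exfalso
        have hj1 := hj.1
        rw [hrest, Finset.mem_filter, hBad, Finset.mem_filter] at hj1
        have hP := hj1.1.2
        have h1 : (𝓘 j).sup' (hne j) μ ≤ (J k).sup' (hJne k) μ :=
          Finset.sup'_mono μ hk (hne j)
        have h2 : (J k).inf' (hJne k) μ ≤ (𝓘 j).inf' (hne j) μ :=
          Finset.inf'_mono μ hk (hne j)
        have h3 : (1 + γ) * (J k).inf' (hJne k) μ ≤ (1 + γ) * (𝓘 j).inf' (hne j) μ := by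
          nlinarith
        linarith
    set lightK : Finset (Fin ℓ) := Finset.univ.filter (fun k => ∑ i ∈ J k, μ i ≤ γ / L)
      with hlightK
    have h1 : ∑ j ∈ B, ∑ i ∈ 𝓘 j, μ i = ∑ i ∈ B.biUnion 𝓘, μ i := by
      rw [Finset.sum_biUnion]
      intro x hx y hy hxy
      exact hdisj x y hxy
    have h2 : ∑ i ∈ lightK.biUnion J, μ i = ∑ k ∈ lightK, ∑ i ∈ J k, μ i := by
      rw [Finset.sum_biUnion]
      intro x hx y hy hxy
      exact hJdisj x y hxy
    have h3 : ∑ i ∈ B.biUnion 𝓘, μ i ≤ ∑ i ∈ lightK.biUnion J, μ i := by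
      refine Finset.sum_le_sum_of_subset_of_nonneg ?_ (fun i _ _ => hμ0 i)
      intro i hi
      rw [Finset.mem_biUnion] at hi ⊢
      obtain ⟨j, hjB, hij⟩ := hi
      obtain ⟨k, hk1, hk2⟩ := hkey j hjB
      refine ⟨k, ?_, hk1 hij⟩
      rw [hlightK, Finset.mem_filter]
      exact ⟨Finset.mem_univ k, hk2⟩
    have h4 : ∑ k ∈ lightK, ∑ i ∈ J k, μ i ≤ (lightK.card : ℝ) * (γ / L) := by
      calc ∑ k ∈ lightK, ∑ i ∈ J k, μ i ≤ ∑ _k ∈ lightK, γ / L := by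
            refine Finset.sum_le_sum ?_
            intro k hk
            rw [hlightK, Finset.mem_filter] at hk
            exact hk.2
        _ = (lightK.card : ℝ) * (γ / L) := by
            rw [Finset.sum_const, nsmul_eq_mul]
    have h5 : (lightK.card : ℝ) ≤ (L : ℝ) := by
      have : lightK.card ≤ ℓ := le_trans (Finset.card_le_card (Finset.filter_subset _ _))
        (by simp)
      exact_mod_cast le_trans this hℓ
    have h6 : (lightK.card : ℝ) * (γ / L) ≤ γ := by
      calc (lightK.card : ℝ) * (γ / L) ≤ (L : ℝ) * (γ / L) := by
            exact mul_le_mul_of_nonneg_right h5 hγL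
        _ = γ := by field_simp
    linarith
  -- Bound for C
  have hCbound : ∑ j ∈ C, ∑ i ∈ 𝓘 j, μ i ≤ γ := by
    -- map each j ∈ C to the block containing its maximum; the minimum of that block lies in 𝓘 j
    set f : Fin r → Fin ℓ := fun j => Classical.choose (hJcover ((𝓘 j).max' (hne j))) with hf
    have hf1 : ∀ j, (𝓘 j).max' (hne j) ∈ J (f j) := fun j => Classical.choose_spec (hJcover _)
    have hkey : ∀ j ∈ C, (J (f j)).min' (hJne (f j)) ∈ 𝓘 j := by
      intro j hj
      rw [hC, Finset.mem_filter] at hj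
      have hnot := hj.2
      obtain ⟨a, b, hab⟩ := hint j
      obtain ⟨c, d, hcd⟩ := hJint (f j)
      set M : Fin n := (𝓘 j).max' (hne j) with hMdef
      set m : Fin n := (J (f j)).min' (hJne (f j)) with hmdef
      have hbmem : M ∈ J (f j) := hf1 j
      rw [hcd, Finset.mem_Icc] at hbmem
      have hmin : m = c := by
        apply le_antisymm
        · have : c ∈ J (f j) := by
            rw [hcd, Finset.mem_Icc]
            exact ⟨le_refl c, le_trans hbmem.1 hbmem.2⟩
          exact Finset.min'_le _ _ this
        · have hmm : m ∈ J (f j) := Finset.min'_mem _ _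
          rw [hcd, Finset.mem_Icc] at hmm
          exact hmm.1
      rw [hmin]
      push_neg at hnot
      obtain ⟨x, hx, hxn⟩ := Finset.not_subset.mp (hnot (f j))
      rw [hab, Finset.mem_Icc] at hx
      have hm : M ∈ 𝓘 j := Finset.max'_mem _ _
      have hab' : a ≤ b := by
        have h := hne j
        rw [hab] at h
        exact Finset.nonempty_Icc.mp h
      have hbmem' : b ∈ 𝓘 j := by rw [hab]; exact Finset.mem_Icc.mpr ⟨hab', le_refl b⟩
      have hbm : b ≤ M := Finset.le_max' _ _ hbmem'
      have hmb : M ≤ b := by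
        rw [hab, Finset.mem_Icc] at hm
        exact hm.2
      have hxd : x ≤ d := le_trans hx.2 (le_trans hbm hbmem.2)
      have hxc : x < c := by
        by_contra h
        push_neg at h
        exact hxn (by rw [hcd]; exact Finset.mem_Icc.mpr ⟨h, hxd⟩)
      rw [hab, Finset.mem_Icc]
      exact ⟨le_trans hx.1 hxc.le, le_trans hbmem.1 hmb⟩
    have hinj : Set.InjOn f ↑C := by
      intro j hj j' hj' hff
      by_contra hne'
      have h1 := hkey j hj
      have h2 := hkey j' hj'
      have heq : (J (f j)).min' (hJne (f j)) = (J (f j')).min' (hJne (f j')) :=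
        congrArg (fun k => (J k).min' (hJne k)) hff
      rw [← heq] at h2
      exact (Finset.disjoint_left.mp (hdisj j j' hne')) h1 h2
    have hcardC : C.card ≤ ℓ := by
      have h := Finset.card_le_card_of_injOn f (fun a _ => Finset.mem_univ (f a)) hinj
      simpa using h
    calc ∑ j ∈ C, ∑ i ∈ 𝓘 j, μ i ≤ ∑ _j ∈ C, γ / L := by
          refine Finset.sum_le_sum ?_
          intro j hj
          rw [hC, Finset.mem_filter, hrest, Finset.mem_filter] at hj
          exact le_of_not_gt hj.1.2
      _ = (C.card : ℝ) * (γ / L) := by rw [Finset.sum_const, nsmul_eq_mul]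
      _ ≤ (L : ℝ) * (γ / L) :=
          mul_le_mul_of_nonneg_right (by exact_mod_cast le_trans hcardC hℓ) hγL
      _ = γ := by field_simp
  calc ∑ j ∈ Bad, ∑ i ∈ 𝓘 j, μ i
      = _ := hsplit
    _ ≤ γ + (γ + γ) := by
        refine add_le_add hAbound (add_le_add hBbound hCbound)
    _ = 3 * γ := by ring
end

section
/- Let μ be a probability distribution on [n], let η > 0, and let 𝓙 be a maximal collection of pairwise disjoint intervals of [n], each minimal with μ-weight at least η/3. Then any interval I' ⊆ [n] with μ(I') ≥ η fully contains some interval of 𝓙. -/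
/-- Let `𝓙` be a maximal collection of pairwise disjoint intervals, each minimal with
μ-weight at least `η/3`. Then every interval of μ-weight at least `η` fully contains
some member of `𝓙`. -/
theorem stmt5 {n : ℕ} (μ : Fin n → ℝ) (hμ0 : ∀ i, 0 ≤ μ i) (hμ1 : ∑ i, μ i = 1)
    (η : ℝ) (hη : 0 < η)
    (𝓙 : Finset (Finset (Fin n)))
    (hJint : ∀ J ∈ 𝓙, IsInterval J)
    (hJw : ∀ J ∈ 𝓙, η / 3 ≤ ∑ i ∈ J, μ i)
    (hJmin : ∀ J ∈ 𝓙, ∀ K : Finset (Fin n), IsInterval K → K ⊂ J → ∑ i ∈ K, μ i < η / 3)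
    (hJdisj : (𝓙 : Set (Finset (Fin n))).Pairwise Disjoint)
    (hJmax : ∀ K : Finset (Fin n), IsInterval K → η / 3 ≤ ∑ i ∈ K, μ i →
        (∀ K' : Finset (Fin n), IsInterval K' → K' ⊂ K → ∑ i ∈ K', μ i < η / 3) →
        (∀ J ∈ 𝓙, Disjoint K J) → K ∈ 𝓙)
    (I' : Finset (Fin n)) (hI' : IsInterval I') (hw : η ≤ ∑ i ∈ I', μ i) :
    ∃ J ∈ 𝓙, J ⊆ I' := by
  classical
  by_contra hnot
  push_neg at hnot
  obtain ⟨a, b, hab⟩ := hI'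
  subst hab
  -- S : points of I' in no member of 𝓙
  set S : Finset (Fin n) := (Finset.Icc a b).filter (fun x => ∀ J ∈ 𝓙, x ∉ J) with hSdef
  have hSsub : S ⊆ Finset.Icc a b := Finset.filter_subset _ _
  -- T : members of 𝓙 meeting I'
  set T : Finset (Finset (Fin n)) := 𝓙.filter (fun J => ¬ Disjoint J (Finset.Icc a b))
    with hTdef
  -- every member of T contains a or b
  have hTab : ∀ J ∈ T, a ∈ J ∨ b ∈ J := by
    intro J hJT
    rw [hTdef, Finset.mem_filter] at hJT
    obtain ⟨hJ, hmeet⟩ := hJT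
    obtain ⟨y, hyJ, hyI⟩ := Finset.not_disjoint_iff.mp hmeet
    obtain ⟨p, q, hpq⟩ := hJint J hJ
    subst hpq
    rw [Finset.mem_Icc] at hyJ hyI
    by_cases hpa : p ≤ a
    · exact Or.inl (Finset.mem_Icc.mpr ⟨hpa, le_trans hyI.1 hyJ.2⟩)
    · have hap : a ≤ p := le_of_lt (lt_of_not_ge hpa)
      have hbq : b ≤ q := by
        by_contra hbq
        have hqb : q ≤ b := le_of_lt (lt_of_not_ge hbq)
        exact hnot _ hJ (Finset.Icc_subset_Icc hap hqb)
      exact Or.inr (Finset.mem_Icc.mpr ⟨le_trans hyJ.1 hyI.2, hbq⟩)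
  -- T has at most two elements
  have hTcard : T.card ≤ 2 := by
    have hsub : T ⊆ 𝓙.filter (fun J => a ∈ J) ∪ 𝓙.filter (fun J => b ∈ J) := by
      intro J hJT
      have hJ : J ∈ 𝓙 := Finset.mem_of_mem_filter _ hJT
      rcases hTab J hJT with h | h
      · exact Finset.mem_union_left _ (Finset.mem_filter.mpr ⟨hJ, h⟩)
      · exact Finset.mem_union_right _ (Finset.mem_filter.mpr ⟨hJ, h⟩)
    have h1 : ∀ c : Fin n, (𝓙.filter (fun J => c ∈ J)).card ≤ 1 := by
      intro c
      apply Finset.card_le_one.mpr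
      intro J1 hJ1 J2 hJ2
      rw [Finset.mem_filter] at hJ1 hJ2
      by_contra hne
      exact Finset.disjoint_left.mp (hJdisj hJ1.1 hJ2.1 hne) hJ1.2 hJ2.2
    calc T.card ≤ (𝓙.filter (fun J => a ∈ J) ∪ 𝓙.filter (fun J => b ∈ J)).card :=
          Finset.card_le_card hsub
      _ ≤ (𝓙.filter (fun J => a ∈ J)).card + (𝓙.filter (fun J => b ∈ J)).card :=
          Finset.card_union_le _ _
      _ ≤ 2 := by have := h1 a; have := h1 b; omega
  -- each member of T contributes < η/3 inside I'
  have hTsm : ∀ J ∈ T, ∑ i ∈ J ∩ Finset.Icc a b, μ i ≤ η / 3 := by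
    intro J hJT
    have hJ : J ∈ 𝓙 := Finset.mem_of_mem_filter _ hJT
    obtain ⟨p, q, hpq⟩ := hJint J hJ
    have hint : IsInterval (J ∩ Finset.Icc a b) := by
      refine ⟨p ⊔ a, q ⊓ b, ?_⟩
      rw [hpq]
      ext x
      simp only [Finset.mem_inter, Finset.mem_Icc, sup_le_iff, le_inf_iff]
      tauto
    have hss : J ∩ Finset.Icc a b ⊂ J := by
      refine Finset.ssubset_iff_subset_ne.mpr ⟨Finset.inter_subset_left, ?_⟩
      intro h
      exact hnot J hJ (by rw [← h]; exact Finset.inter_subset_right)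
    exact le_of_lt (hJmin J hJ _ hint hss)
  -- weight of the removed part is at most 2η/3
  have hsplit : ∑ i ∈ Finset.Icc a b, μ i
      = (∑ i ∈ S, μ i) + ∑ i ∈ (Finset.Icc a b).filter (fun x => ¬ ∀ J ∈ 𝓙, x ∉ J), μ i := by
    rw [hSdef]
    exact (Finset.sum_filter_add_sum_filter_not _ _ _).symm
  have hrest : ∑ i ∈ (Finset.Icc a b).filter (fun x => ¬ ∀ J ∈ 𝓙, x ∉ J), μ i
      ≤ 2 * (η / 3) := by
    have hcover : (Finset.Icc a b).filter (fun x => ¬ ∀ J ∈ 𝓙, x ∉ J)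
        ⊆ T.biUnion (fun J => J ∩ Finset.Icc a b) := by
      intro x hx
      rw [Finset.mem_filter] at hx
      push_neg at hx
      obtain ⟨hxI, J, hJ, hxJ⟩ := hx
      refine Finset.mem_biUnion.mpr ⟨J, ?_, Finset.mem_inter.mpr ⟨hxJ, hxI⟩⟩
      rw [hTdef, Finset.mem_filter]
      exact ⟨hJ, Finset.not_disjoint_iff.mpr ⟨x, hxJ, hxI⟩⟩
    have hdisj : (T : Set (Finset (Fin n))).PairwiseDisjoint
        (fun J => J ∩ Finset.Icc a b) := by
      intro J1 hJ1 J2 hJ2 hne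
      have := hJdisj (Finset.mem_of_mem_filter _ hJ1) (Finset.mem_of_mem_filter _ hJ2) hne
      exact (this.mono Finset.inter_subset_left Finset.inter_subset_left)
    calc ∑ i ∈ (Finset.Icc a b).filter (fun x => ¬ ∀ J ∈ 𝓙, x ∉ J), μ i
        ≤ ∑ i ∈ T.biUnion (fun J => J ∩ Finset.Icc a b), μ i :=
          Finset.sum_le_sum_of_subset_of_nonneg hcover (fun i _ _ => hμ0 i)
      _ = ∑ J ∈ T, ∑ i ∈ J ∩ Finset.Icc a b, μ i := Finset.sum_biUnion hdisj
      _ ≤ ∑ J ∈ T, (η / 3) := Finset.sum_le_sum hTsm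
      _ = T.card * (η / 3) := by rw [Finset.sum_const, nsmul_eq_mul]
      _ ≤ 2 * (η / 3) := by
          have : (T.card : ℝ) ≤ 2 := by exact_mod_cast hTcard
          nlinarith
  have hSw : η / 3 ≤ ∑ i ∈ S, μ i := by
    have : η ≤ (∑ i ∈ S, μ i) + 2 * (η / 3) := by
      rw [hsplit] at hw; linarith
    linarith
  -- S is nonempty
  have hSne : S.Nonempty := by
    by_contra h
    rw [Finset.not_nonempty_iff_eq_empty] at h
    rw [h, Finset.sum_empty] at hSw
    linarith
  -- S is an interval
  have hSI : S = Finset.Icc (S.min' hSne) (S.max' hSne) := by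
    ext x
    constructor
    · intro hx
      exact Finset.mem_Icc.mpr ⟨Finset.min'_le _ _ hx, Finset.le_max' _ _ hx⟩
    · intro hx
      rw [Finset.mem_Icc] at hx
      have hmin := S.min'_mem hSne
      have hmax := S.max'_mem hSne
      have hmin' := Finset.mem_filter.mp hmin
      have hmax' := Finset.mem_filter.mp hmax
      rw [Finset.mem_Icc] at hmin' hmax'
      replace hmin := hmin'
      replace hmax := hmax'
      refine Finset.mem_filter.mpr
        ⟨Finset.mem_Icc.mpr ⟨le_trans hmin.1.1 hx.1, le_trans hx.2 hmax.1.2⟩, ?_⟩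
      intro J hJ hxJ
      obtain ⟨p, q, hpq⟩ := hJint J hJ
      subst hpq
      rw [Finset.mem_Icc] at hxJ
      have hminq : S.min' hSne ≤ q := le_trans hx.1 hxJ.2
      have hpmax : p ≤ S.max' hSne := le_trans hxJ.1 hx.2
      have h1 : ¬ p ≤ S.min' hSne := fun h => hmin.2 _ hJ (Finset.mem_Icc.mpr ⟨h, hminq⟩)
      have h2 : ¬ S.max' hSne ≤ q := fun h => hmax.2 _ hJ (Finset.mem_Icc.mpr ⟨hpmax, h⟩)
      exact hnot _ hJ (Finset.Icc_subset_Icc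
        (le_trans hmin.1.1 (le_of_lt (lt_of_not_ge h1)))
        (le_trans (le_of_lt (lt_of_not_ge h2)) hmax.1.2))
  -- take a minimal-cardinality interval inside S of weight ≥ η/3
  set 𝒞 : Finset (Finset (Fin n)) :=
    S.powerset.filter (fun K => IsInterval K ∧ η / 3 ≤ ∑ i ∈ K, μ i) with hCdef
  have hSC : S ∈ 𝒞 := by
    rw [hCdef, Finset.mem_filter]
    exact ⟨Finset.mem_powerset.mpr le_rfl, ⟨_, _, hSI⟩, hSw⟩
  obtain ⟨K, hKC, hKmin⟩ := Finset.exists_min_image 𝒞 (fun K => K.card) ⟨S, hSC⟩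
  rw [hCdef, Finset.mem_filter, Finset.mem_powerset] at hKC
  obtain ⟨hKS, hKint, hKw⟩ := hKC
  have hK𝓙 : K ∈ 𝓙 := by
    apply hJmax K hKint hKw
    · intro K' hK'int hK'ss
      by_contra h
      push_neg at h
      have hK'C : K' ∈ 𝒞 := by
        rw [hCdef, Finset.mem_filter, Finset.mem_powerset]
        exact ⟨le_trans hK'ss.subset hKS, hK'int, h⟩
      have := hKmin K' hK'C
      have := Finset.card_lt_card hK'ss
      omega
    · intro J hJ
      rw [Finset.disjoint_left]
      intro x hxK hxJ
      have hxS := hKS hxK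
      rw [hSdef, Finset.mem_filter] at hxS
      exact hxS.2 J hJ hxJ
  exact hnot K hK𝓙 (le_trans hKS hSsub)
end

section
/- Let μ be a probability distribution on [n], let 𝓘 be an interval partition of [n] of length at most r with every non-singleton interval of μ-weight at most η, except possibly a subcollection 𝓗 with total weight at most γ. Let 𝓝 be the set of intervals in 𝓘 that have size greater than n/c or μ-weight less than ε/r. If cη + γ ≤ ε, then the total μ-weight of the intervals in 𝓝 is at most 2ε. -/
/-- If `𝓘` is an `(η,γ)`-fine interval partition of length at most `r` and `cη + γ ≤ ε`,
then the total weight of intervals of size greater than `n/c` or of weight less than `ε/r`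
is at most `2ε`. -/
theorem stmt7 {n ℓ : ℕ} (μ : Fin n → ℝ) (hμ0 : ∀ i, 0 ≤ μ i) (hμ1 : ∑ i, μ i = 1)
    (r : ℕ) (c ε η γ : ℝ)
    (hr : ℓ ≤ r) (hrpos : 0 < r) (hc : 0 < c) (hcn : c ≤ (n : ℝ))
    (hε : 0 < ε) (hη : 0 ≤ η) (hγ : 0 ≤ γ)
    (hsmall : c * η + γ ≤ ε)
    (𝓘 : Fin ℓ → Finset (Fin n)) (hint : ∀ j, IsInterval (𝓘 j)) (hne : ∀ j, (𝓘 j).Nonempty)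
    (hdisj : ∀ j j', j ≠ j' → Disjoint (𝓘 j) (𝓘 j'))
    (hcover : ∀ i, ∃ j, i ∈ 𝓘 j)
    -- (η, γ)-fineness: the violating intervals have total weight at most γ
    (hfine : ∑ j ∈ Finset.univ.filter (fun j =>
        η < ∑ i ∈ 𝓘 j, μ i ∧ 1 < (𝓘 j).card), ∑ i ∈ 𝓘 j, μ i ≤ γ) :
    ∑ j ∈ Finset.univ.filter (fun j =>
        (n : ℝ) / c < ((𝓘 j).card : ℝ) ∨ ∑ i ∈ 𝓘 j, μ i < ε / r),
      ∑ i ∈ 𝓘 j, μ i ≤ 2 * ε := by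
  have hn : (0:ℝ) < n := lt_of_lt_of_le hc hcn
  set w : Fin ℓ → ℝ := fun j => ∑ i ∈ 𝓘 j, μ i with hw
  have hw0 : ∀ j, 0 ≤ w j := fun j => Finset.sum_nonneg (fun i _ => hμ0 i)
  set B := Finset.univ.filter (fun j => (n:ℝ)/c < ((𝓘 j).card : ℝ)) with hBdef
  set S := Finset.univ.filter (fun j : Fin ℓ => w j < ε / r) with hSdef
  set H := Finset.univ.filter (fun j : Fin ℓ => η < w j ∧ 1 < (𝓘 j).card) with hHdef
  -- bound the number of big intervals
  have hcardsum : (∑ j ∈ B, ((𝓘 j).card : ℝ)) ≤ (n : ℝ) := by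
    have h1 : ∑ j ∈ B, (𝓘 j).card = (B.biUnion 𝓘).card := by
      rw [Finset.card_biUnion]
      intro j _ j' _ hjj'
      exact hdisj j j' hjj'
    have h2 : (B.biUnion 𝓘).card ≤ n := by
      simpa using Finset.card_le_univ (B.biUnion 𝓘)
    calc (∑ j ∈ B, ((𝓘 j).card : ℝ)) = ((∑ j ∈ B, (𝓘 j).card : ℕ) : ℝ) := by
          push_cast; ring
      _ ≤ (n : ℝ) := by rw [h1]; exact_mod_cast h2
  have hBle : (B.card : ℝ) * ((n:ℝ)/c) ≤ (n:ℝ) := by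
    refine le_trans ?_ hcardsum
    have := Finset.card_nsmul_le_sum B (fun j => ((𝓘 j).card : ℝ)) ((n:ℝ)/c)
      (fun j hj => le_of_lt (by simpa [hBdef] using (Finset.mem_filter.mp hj).2))
    simpa [nsmul_eq_mul] using this
  have hBc : (B.card : ℝ) ≤ c := by
    have h : (B.card:ℝ) * (n:ℝ) ≤ (n:ℝ) * c := by
      have h2 := mul_le_mul_of_nonneg_right hBle hc.le
      calc (B.card:ℝ) * n = (B.card:ℝ) * ((n:ℝ)/c) * c := by field_simp
        _ ≤ (n:ℝ) * c := h2
    exact le_of_mul_le_mul_right (by linarith) hn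
  -- big intervals not in H have weight ≤ η
  have hBH : ∀ j ∈ B \ H, w j ≤ η := by
    intro j hj
    rw [Finset.mem_sdiff] at hj
    obtain ⟨hjB, hjH⟩ := hj
    have hcard : (n:ℝ)/c < ((𝓘 j).card : ℝ) := by
      simpa [hBdef] using (Finset.mem_filter.mp hjB).2
    have h1c : (1:ℝ) ≤ (n:ℝ)/c := (one_le_div hc).mpr hcn
    have hcard1 : 1 < (𝓘 j).card := by exact_mod_cast lt_of_le_of_lt h1c hcard
    by_contra h
    exact hjH (Finset.mem_filter.mpr ⟨Finset.mem_univ j, ⟨lt_of_not_ge h, hcard1⟩⟩)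
  -- sum over B
  have hBsum : ∑ j ∈ B, w j ≤ c * η + γ := by
    have hsplit : ∑ j ∈ B ∩ H, w j + ∑ j ∈ B \ H, w j = ∑ j ∈ B, w j :=
      Finset.sum_inter_add_sum_sdiff B H w
    have hBHle : ∑ j ∈ B ∩ H, w j ≤ γ := by
      refine le_trans (Finset.sum_le_sum_of_subset_of_nonneg (Finset.inter_subset_right)
        (fun j _ _ => hw0 j)) ?_
      simpa [hHdef, hw] using hfine
    have hBdiff : ∑ j ∈ B \ H, w j ≤ c * η := by
      calc ∑ j ∈ B \ H, w j ≤ (B \ H).card • η := Finset.sum_le_card_nsmul _ _ _ hBH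
        _ = ((B \ H).card : ℝ) * η := by rw [nsmul_eq_mul]
        _ ≤ (B.card : ℝ) * η := by
            apply mul_le_mul_of_nonneg_right _ hη
            exact_mod_cast Finset.card_le_card (Finset.sdiff_subset)
        _ ≤ c * η := mul_le_mul_of_nonneg_right hBc hη
    linarith
  -- sum over S
  have hSsum : ∑ j ∈ S, w j ≤ ε := by
    have : ∑ j ∈ S, w j ≤ S.card • (ε / r) := by
      refine Finset.sum_le_card_nsmul _ _ _ (fun j hj => le_of_lt ?_)
      simpa [hSdef] using (Finset.mem_filter.mp hj).2
    have hScard : (S.card : ℝ) ≤ r := by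
      have : S.card ≤ ℓ := by simpa using Finset.card_le_univ S
      exact_mod_cast le_trans this hr
    have hεr : (0:ℝ) ≤ ε / r := div_nonneg hε.le (by positivity)
    have hrR : (0:ℝ) < r := by exact_mod_cast hrpos
    calc ∑ j ∈ S, w j ≤ (S.card : ℝ) * (ε / r) := by rwa [nsmul_eq_mul] at this
      _ ≤ (r:ℝ) * (ε / r) := mul_le_mul_of_nonneg_right hScard hεr
      _ = ε := by field_simp
  -- combine
  have hsub : Finset.univ.filter (fun j =>
      (n : ℝ) / c < ((𝓘 j).card : ℝ) ∨ w j < ε / r) ⊆ B ∪ S := by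
    intro j hj
    rw [Finset.mem_filter] at hj
    rw [Finset.mem_union, hBdef, hSdef, Finset.mem_filter, Finset.mem_filter]
    tauto
  calc ∑ j ∈ Finset.univ.filter (fun j =>
        (n : ℝ) / c < ((𝓘 j).card : ℝ) ∨ w j < ε / r), w j
      ≤ ∑ j ∈ B ∪ S, w j :=
        Finset.sum_le_sum_of_subset_of_nonneg hsub (fun j _ _ => hw0 j)
    _ ≤ ∑ j ∈ B, w j + ∑ j ∈ S, w j := by
        have := Finset.sum_union_inter (s₁ := B) (s₂ := S) (f := w)
        have hnn : 0 ≤ ∑ j ∈ B ∩ S, w j := Finset.sum_nonneg (fun j _ => hw0 j)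
        linarith
    _ ≤ (c * η + γ) + ε := by linarith
    _ ≤ 2 * ε := by linarith
end

section
/- Let μ be a probability distribution on [n], I ⊆ [n] an interval, and suppose d(μ|I, U_I) ≥ ε where ε ∈ (0,1]. Then the set B_1 = {i ∈ I : μ|I(i) < (1 + ε/3)/|I|} has cardinality at least ε|I|/2. -/
/-!
Since `μ|I` and `U_I` both have total mass one, their ℓ1 distance is twice the mass by which
`μ|I` falls short of `1/|I|`. Each point contributes at most `1/|I|` to this deficit, and only
points with `μ|I(i) < 1/|I|` contribute at all; these lie in `B₁`, so `ε ≤ 2 |B₁| / |I|`.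
-/

open Finset

section NegPart

variable {ι α : Type*} [AddCommGroup α]

theorem abs_eq_self_add_two_nsmul_negPart [Lattice α] [IsOrderedAddMonoid α] (a : α) :
    |a| = a + 2 • a⁻ := by
  rw [← posPart_add_negPart, eq_add_of_sub_eq (posPart_sub_negPart a), two_nsmul, add_assoc]

theorem Finset.sum_abs_sub_eq_two_nsmul_sum_negPart [Lattice α] [IsOrderedAddMonoid α]
    (s : Finset ι) {f g : ι → α} (h : ∑ i ∈ s, f i = ∑ i ∈ s, g i) :
    ∑ i ∈ s, |f i - g i| = 2 • ∑ i ∈ s, (f i - g i)⁻ := by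
  simp only [abs_eq_self_add_two_nsmul_negPart, sum_add_distrib, sum_sub_distrib, h, sub_self,
    zero_add, smul_sum]

theorem Finset.sum_negPart_sub_le_card_filter_nsmul [LinearOrder α] [IsOrderedAddMonoid α]
    (s : Finset ι) {f : ι → α} (hf : ∀ i ∈ s, 0 ≤ f i) {c t : α} (hc : 0 ≤ c) (hct : c ≤ t) :
    ∑ i ∈ s, (f i - c)⁻ ≤ #(s.filter (f · < t)) • c := by
  rw [← sum_const, sum_filter]
  refine sum_le_sum fun i hi => ?_
  split_ifs with hlt
  · simpa [negPart_def, hc] using hf i hi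
  · simpa [negPart_def] using hct.trans (not_lt.mp hlt)

end NegPart

theorem stmt18_general {n : ℕ} (μ : Fin n → ℝ) (hμ0 : ∀ i, 0 ≤ μ i)
    (I : Finset (Fin n)) (hne : I.Nonempty)
    (hIw : 0 < ∑ i ∈ I, μ i)
    (ε : ℝ) (hε0 : 0 < ε)
    (hfar : ε ≤ ∑ i ∈ I, |μ i / (∑ i' ∈ I, μ i') - 1 / (I.card : ℝ)|) :
    ε * (I.card : ℝ) / 2 ≤
      ((I.filter fun i => μ i / (∑ i' ∈ I, μ i') < (1 + ε / 3) / (I.card : ℝ)).card : ℝ) := by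
  set W := ∑ i' ∈ I, μ i'
  set m := (I.card : ℝ)
  have hm : 0 < m := by simpa [m] using hne.card_pos
  have hν : ∑ i ∈ I, μ i / W = ∑ _i ∈ I, 1 / m := by
    rw [← sum_div, div_self hIw.ne', sum_const, nsmul_eq_mul, mul_one_div_cancel hm.ne']
  have hdeficit := I.sum_negPart_sub_le_card_filter_nsmul (f := (μ · / W))
    (t := (1 + ε / 3) / m) (fun i _ => div_nonneg (hμ0 i) hIw.le) (one_div_pos.mpr hm).le
    (div_le_div_of_nonneg_right (by linarith) hm.le)
  set B := I.filter fun i => μ i / W < (1 + ε / 3) / m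
  have hεB : ε ≤ 2 * (#B * (1 / m)) := by
    rw [I.sum_abs_sub_eq_two_nsmul_sum_negPart hν] at hfar
    simp only [nsmul_eq_mul, Nat.cast_ofNat] at hfar hdeficit
    linarith
  calc ε * m / 2 ≤ 2 * (#B * (1 / m)) * m / 2 := by gcongr
    _ = #B := by field_simp

/-- Bucketing lemma, part 1: if the conditional distribution `μ|I` on an interval `I` is at
ℓ1 distance at least `ε` from uniform, then the set
`B₁ = {i ∈ I : μ|I(i) < (1 + ε/3)/|I|}` has cardinality at least `ε|I|/2`. -/
theorem stmt18 {n : ℕ} (μ : Fin n → ℝ) (hμ0 : ∀ i, 0 ≤ μ i) (hμ1 : ∑ i, μ i = 1)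
    (I : Finset (Fin n)) (hI : IsInterval I) (hne : I.Nonempty)
    (hIw : 0 < ∑ i ∈ I, μ i)
    (ε : ℝ) (hε0 : 0 < ε) (hε1 : ε ≤ 1)
    (hfar : ε ≤ ∑ i ∈ I, |μ i / (∑ i' ∈ I, μ i') - 1 / (I.card : ℝ)|) :
    ε * (I.card : ℝ) / 2 ≤
      ((I.filter fun i => μ i / (∑ i' ∈ I, μ i') < (1 + ε / 3) / (I.card : ℝ)).card : ℝ) :=
  stmt18_general μ hμ0 I hne hIw ε hε0 hfar
end
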